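/- Let T be a tree, and suppose vertex v performs an improving swap of edge vu to vw, producing tree T'. Let A be the component of T minus edge vu containing v and B the other component. If x ∈ A and y ∈ B satisfy d_{T'}(x,y) = ecc_{T'}(y), then ecc_T(x) > ecc_{T'}(y). That is, the new eccentricity of any vertex in B whose eccentricity is realized across the swapped edge is strictly less than the old eccentricity of the corresponding vertex in A. -/

import Mathlib

/-!
Let `A ∋ v` and `B ∋ u` be the two sides of `T - vu`. Both `T` and `T'` contain the forest
`T - vu`, so distances within `A` are the same in `T` and `T'`. Hence a vertex `b` with
`d_T(v, b) = ecc_T(v)` lies in `B`: otherwise `ecc_T'(v) ≥ d_T'(v, b) = ecc_T(v)`. Since `vw`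
separates `x` from `y` in `T'` and `vu` separates `x` from `b` in `T`,
`ecc_T'(y) = d_T'(x, v) + d_T'(v, y) ≤ d_T(x, v) + ecc_T'(v) < d_T(x, v) + d_T(v, b)
= d_T(x, b) ≤ ecc_T(x)`.
-/

namespace NCG
open SimpleGraph

variable {V : Type*}

/-- Eccentricity of a vertex: maximum graph distance to any other vertex. -/
noncomputable def ecc [Fintype V] (G : SimpleGraph V) (x : V) : ℕ :=
  Finset.univ.sup fun y => G.dist x y

/-- Diameter: maximum eccentricity. -/
noncomputable def diam [Fintype V] (G : SimpleGraph V) : ℕ :=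
  Finset.univ.sup fun x => ecc G x

/-- Radius: minimum eccentricity. -/
noncomputable def rad [Fintype V] (G : SimpleGraph V) : ℕ :=
  sInf (Set.range (ecc G))

section Eccentricity

variable [Fintype V] (G : SimpleGraph V)

lemma dist_le_ecc (x y : V) : G.dist x y ≤ ecc G x :=
  Finset.le_sup (Finset.mem_univ y)

lemma exists_dist_eq_ecc (x : V) : ∃ y, G.dist x y = ecc G x := by
  obtain ⟨y, -, hy⟩ := Finset.exists_mem_eq_sup Finset.univ ⟨x, Finset.mem_univ x⟩ (G.dist x)
  exact ⟨y, hy.symm⟩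

end Eccentricity

end NCG

namespace SimpleGraph

variable {V : Type*} {G H : SimpleGraph V} {x z : V}

/-- Both distances are the length of the unique path from `x` to `z`. -/
lemma IsAcyclic.dist_eq_of_le (hG : G.IsAcyclic) (hHG : H ≤ G) (hxz : H.Reachable x z) :
    G.dist x z = H.dist x z := by
  obtain ⟨p, hp, hpG⟩ := (hxz.mono hHG).exists_path_of_dist
  obtain ⟨q, hq, hqH⟩ := hxz.exists_path_of_dist
  have hpq : (⟨p, hp⟩ : G.Path x z) = ⟨q.mapLe hHG, hq.mapLe hHG⟩ :=
    (hG.subsingleton_path x z).elim _ _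
  rw [← hpG, ← hqH, ← Walk.length_mapLe hHG q, congrArg (fun r : G.Path x z => r.1.length) hpq]

/-- A shortest walk from `x` to `z` has to use the edge `s(a, c)`, so it passes through `a`. -/
lemma dist_eq_add_of_not_reachable_deleteEdges {a c : V} (hxz : G.Reachable x z)
    (hsep : ¬(G.deleteEdges {s(a, c)}).Reachable x z) :
    G.dist x z = G.dist x a + G.dist a z := by
  classical
  obtain ⟨p, hp⟩ := hxz.exists_walk_length_eq_dist
  have hedge : s(a, c) ∈ p.edges := by
    by_contra h
    exact hsep ⟨p.toDeleteEdge _ h⟩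
  have ha : a ∈ p.support := p.fst_mem_support_of_mem_edges hedge
  rw [← hp, ← length_eq_dist_of_subwalk hp (p.isSubwalk_takeUntil ha),
    ← length_eq_dist_of_subwalk hp (p.isSubwalk_dropUntil ha), ← Walk.length_append,
    p.take_spec ha]

lemma IsAcyclic.not_reachable_deleteEdges_of_adj (hG : G.IsAcyclic) {a c : V} (hac : G.Adj a c) :
    ¬(G.deleteEdges {s(a, c)}).Reachable a c :=
  isBridge_iff.mp (isAcyclic_iff_forall_adj_isBridge.mp hG hac)

variable {G' : SimpleGraph V} {e e' : Sym2 V}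

lemma deleteEdges_le_of_edgeSet_eq_swap (h : G'.edgeSet = (G.edgeSet \ {e}) ∪ {e'}) :
    G.deleteEdges {e} ≤ G' := by
  rw [← edgeSet_subset_edgeSet, edgeSet_deleteEdges, h]
  exact Set.subset_union_left

lemma deleteEdges_le_deleteEdges_of_edgeSet_eq_swap
    (h : G'.edgeSet = (G.edgeSet \ {e}) ∪ {e'}) : G'.deleteEdges {e'} ≤ G.deleteEdges {e} := by
  rw [← edgeSet_subset_edgeSet, edgeSet_deleteEdges, edgeSet_deleteEdges, h,
    Set.union_sdiff_right]
  exact Set.sdiff_subset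

end SimpleGraph

namespace NCG
open SimpleGraph

variable {V : Type*}

theorem stmt2_general [Fintype V] (T : SimpleGraph V) (hT : T.IsTree)
    (v u w : V) (hvu : T.Adj v u)
    (T' : SimpleGraph V) (hT't : T'.IsTree)
    (hT'edges : T'.edgeSet = (T.edgeSet \ {s(v, u)}) ∪ {s(v, w)})
    (himp : ecc T' v < ecc T v)
    (x y : V)
    (hx : (T.deleteEdges {s(v, u)}).Reachable v x)
    (hy : (T.deleteEdges {s(v, u)}).Reachable u y)
    (hd : T'.dist x y = ecc T' y) :
    ecc T' y < ecc T x := by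
  set A := T.deleteEdges {s(v, u)}
  have hdistA {a b : V} (hab : A.Reachable a b) : T'.dist a b = T.dist a b := by
    rw [hT't.isAcyclic.dist_eq_of_le (deleteEdges_le_of_edgeSet_eq_swap hT'edges) hab, hT.isAcyclic.dist_eq_of_le (deleteEdges_le _) hab]
  have hvu' : ¬A.Reachable v u := hT.isAcyclic.not_reachable_deleteEdges_of_adj hvu
  obtain ⟨b, hb⟩ := exists_dist_eq_ecc T v
  have hvb : ¬A.Reachable v b := fun hvb => by
    have := dist_le_ecc T' v b
    rw [hdistA hvb] at this
    omega
  have hxy : T'.dist x y = T'.dist x v + T'.dist v y :=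
    dist_eq_add_of_not_reachable_deleteEdges (hT't.connected x y) fun h =>
      hvu' (hx.trans ((h.mono (deleteEdges_le_deleteEdges_of_edgeSet_eq_swap hT'edges)).trans
        hy.symm))
  have hxb : T.dist x b = T.dist x v + T.dist v b :=
    dist_eq_add_of_not_reachable_deleteEdges (c := u) (hT.connected x b) fun h => hvb (hx.trans h)
  calc ecc T' y = T.dist x v + T'.dist v y := by rw [← hd, hxy, hdistA hx.symm]
    _ < T.dist x v + ecc T v := by have := dist_le_ecc T' v y; omega
    _ = T.dist x b := by rw [hxb, hb]
    _ ≤ ecc T x := dist_le_ecc T x b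

/-- if x ∈ A and y ∈ B with d_{T'}(x,y) = ecc_{T'}(y), then
ecc_T(x) > ecc_{T'}(y). -/
theorem stmt2 [Fintype V] [DecidableEq V] (T : SimpleGraph V) (hT : T.IsTree)
    (v u w : V) (hvu : T.Adj v u)
    (hw : (T.deleteEdges {s(v, u)}).Reachable u w)
    (T' : SimpleGraph V) (hT't : T'.IsTree)
    (hT'edges : T'.edgeSet = (T.edgeSet \ {s(v, u)}) ∪ {s(v, w)})
    (himp : ecc T' v < ecc T v)
    (x y : V)
    (hx : (T.deleteEdges {s(v, u)}).Reachable v x)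
    (hy : (T.deleteEdges {s(v, u)}).Reachable u y)
    (hd : T'.dist x y = ecc T' y) :
    ecc T' y < ecc T x :=
  stmt2_general T hT v u w hvu T' hT't hT'edges himp x y hx hy hd

end NCG
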